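/- Let R be a commutative ring and consider the additive group x·F_2[x] (polynomials over F_2 with zero constant term) modulo the subgroup generated by all elements f^2 - f with f ∈ x·F_2[x]. Then the quotient group A = x·F_2[x]/(f^2 - f : f ∈ x·F_2[x]) is an F_2-vector space with basis given by the classes of monomials x^k for k odd, k ≥ 1. -/

import Mathlib

open Polynomial

/-- `x·𝔽₂[x]`: polynomials over `𝔽₂` with zero constant coefficient. -/
noncomputable def augIdeal : Submodule (ZMod 2) (Polynomial (ZMod 2)) :=
  LinearMap.ker (lcoeff (ZMod 2) 0)

/-- The subgroup of `x·𝔽₂[x]` generated by all elements `f² - f`, `f ∈ x·𝔽₂[x]`. -/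
noncomputable def sqSub : Submodule (ZMod 2) augIdeal :=
  Submodule.span (ZMod 2)
    {q : augIdeal | ∃ f : augIdeal, (q : Polynomial (ZMod 2)) = (f : Polynomial (ZMod 2)) ^ 2 - f}

/-- The element `x^k` of `x·𝔽₂[x]`, for `k ≠ 0`. -/
noncomputable def xel (k : ℕ) (hk : k ≠ 0) : augIdeal :=
  ⟨X ^ k, by simp [augIdeal, LinearMap.mem_ker, coeff_X_pow, Ne.symm hk]⟩

/-!
Over `𝔽₂` we have `f² = f(x²)`, so modulo `f² - f` the class of `x^(2n)` equals that of `x^n`: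
every monomial `x^n`, `n ≥ 1`, is congruent to `x^k` with `k` the odd part of `n`. Conversely,
summing the coefficients of a polynomial along the fibres of `n ↦ oddPart n` is a linear map
`𝔽₂[x] → ⊕_{k odd} 𝔽₂` invariant under `f ↦ f²`, so it descends to the quotient, and it is
inverse to the map sending the basis vector at `k` to the class of `x^k`.
-/

/-- The odd part `n / 2^(v₂ n)` of `n`, with the junk value `1` at `n = 0`. -/
noncomputable def oddPart (n : ℕ) : {k : ℕ // Odd k} :=
  if h : n = 0 then ⟨1, odd_one⟩
  else ⟨ordCompl[2] n,
    Nat.odd_iff.2 (Nat.two_dvd_ne_zero.1 (Nat.not_dvd_ordCompl Nat.prime_two h))⟩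

lemma oddPart_two_mul (n : ℕ) : oddPart (2 * n) = oddPart n := by
  rcases eq_or_ne n 0 with rfl | hn
  · rfl
  · rw [oddPart, oddPart, dif_neg hn, dif_neg (by omega)]
    congr 1
    simpa using Nat.ordCompl_self_pow_mul n 1 Nat.prime_two

lemma oddPart_of_odd {k : ℕ} (hk : Odd k) : oddPart k = ⟨k, hk⟩ := by
  rw [oddPart, dif_neg hk.pos.ne']
  congr 1
  rw [Nat.factorization_eq_zero_of_not_dvd (Nat.two_dvd_ne_zero.2 (Nat.odd_iff.1 hk))]
  simp

noncomputable def oddCoeffs (R : Type*) [Semiring R] : R[X] →ₗ[R] ({k : ℕ // Odd k} →₀ R) :=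
  lsum fun n => Finsupp.lsingle (oddPart n)

lemma oddCoeffs_monomial {R : Type*} [Semiring R] (n : ℕ) (a : R) :
    oddCoeffs R (monomial n a) = Finsupp.single (oddPart n) a := by
  simp [oddCoeffs]

lemma oddCoeffs_sq (p : (ZMod 2)[X]) : oddCoeffs (ZMod 2) (p ^ 2) = oddCoeffs (ZMod 2) p := by
  induction p using Polynomial.induction_on' with
  | add p q hp hq => rw [add_pow_char, map_add, map_add, hp, hq]
  | monomial n a =>
    rw [monomial_pow, oddCoeffs_monomial, oddCoeffs_monomial, mul_comm, oddPart_two_mul,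
      ZMod.pow_card]

lemma sqSub_le_ker_oddCoeffs :
    sqSub ≤ LinearMap.ker (oddCoeffs (ZMod 2) ∘ₗ augIdeal.subtype) := by
  rw [sqSub, Submodule.span_le]
  rintro q ⟨f, hf⟩
  simp [hf, oddCoeffs_sq]

noncomputable def toOddCoeffs : (augIdeal ⧸ sqSub) →ₗ[ZMod 2] ({k : ℕ // Odd k} →₀ ZMod 2) :=
  sqSub.liftQ _ sqSub_le_ker_oddCoeffs

noncomputable def ofOddCoeffs : ({k : ℕ // Odd k} →₀ ZMod 2) →ₗ[ZMod 2] (augIdeal ⧸ sqSub) :=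
  Finsupp.linearCombination (ZMod 2) fun k =>
    Submodule.Quotient.mk (p := sqSub) (xel k.1 k.2.pos.ne')

lemma ofOddCoeffs_single (k : {k : ℕ // Odd k}) :
    ofOddCoeffs (Finsupp.single k 1) =
      Submodule.Quotient.mk (p := sqSub) (xel k.1 k.2.pos.ne') := by
  simp [ofOddCoeffs]

lemma toOddCoeffs_mk_xel (n : ℕ) (hn : n ≠ 0) :
    toOddCoeffs (Submodule.Quotient.mk (p := sqSub) (xel n hn)) =
      Finsupp.single (oddPart n) 1 := by
  simp [toOddCoeffs, xel, ← monomial_one_right_eq_X_pow, oddCoeffs_monomial]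

lemma mk_xel_two_mul (n : ℕ) (hn : n ≠ 0) :
    Submodule.Quotient.mk (p := sqSub) (xel (2 * n) (by omega)) =
      Submodule.Quotient.mk (p := sqSub) (xel n hn) := by
  rw [Submodule.Quotient.eq]
  refine Submodule.subset_span ⟨xel n hn, ?_⟩
  simp [xel, pow_mul']

lemma mk_xel_oddPart (n : ℕ) (hn : n ≠ 0) :
    Submodule.Quotient.mk (p := sqSub) (xel n hn) =
      Submodule.Quotient.mk (p := sqSub) (xel (oddPart n).1 (oddPart n).2.pos.ne') := by
  induction n using Nat.strong_induction_on with
  | _ n ih =>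
    rcases Nat.even_or_odd n with ⟨m, rfl⟩ | hodd
    · have hm : m ≠ 0 := by omega
      simp only [← two_mul, mk_xel_two_mul m hm, oddPart_two_mul]
      exact ih m (by omega) hm
    · simp only [oddPart_of_odd hodd]

lemma X_mul_mem_augIdeal (p : (ZMod 2)[X]) : X * p ∈ augIdeal :=
  LinearMap.mem_ker.2 (coeff_X_mul_zero p)

noncomputable def mulX : (ZMod 2)[X] →ₗ[ZMod 2] augIdeal where
  toFun p := ⟨X * p, X_mul_mem_augIdeal p⟩
  map_add' p q := Subtype.ext (mul_add X p q)
  map_smul' c p := Subtype.ext (mul_smul_comm c X p)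

lemma mulX_surjective : Function.Surjective mulX := by
  rintro ⟨g, hg⟩
  obtain ⟨q, rfl⟩ := X_dvd_iff.2 hg
  exact ⟨q, rfl⟩

lemma mulX_monomial (n : ℕ) : mulX (monomial n 1) = xel (n + 1) n.succ_ne_zero := by
  ext1
  simp [mulX, xel, monomial_one_right_eq_X_pow, pow_succ']

lemma toOddCoeffs_comp_ofOddCoeffs : toOddCoeffs ∘ₗ ofOddCoeffs = LinearMap.id := by
  ext k : 2
  simp [ofOddCoeffs_single, toOddCoeffs_mk_xel, oddPart_of_odd k.2]

lemma ofOddCoeffs_comp_toOddCoeffs : ofOddCoeffs ∘ₗ toOddCoeffs = LinearMap.id := by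
  refine Submodule.linearMap_qext _ <| (LinearMap.cancel_right mulX_surjective).1 ?_
  ext n : 2
  simp [mulX_monomial, toOddCoeffs_mk_xel, ofOddCoeffs_single, ← mk_xel_oddPart]

/-- `A = x·𝔽₂[x]/(f²-f)` is an `𝔽₂`-vector space with basis the classes of the
monomials `x^k` with `k` odd. -/
theorem basis_odd_monomials :
    ∃ b : Module.Basis {k : ℕ // Odd k} (ZMod 2) (augIdeal ⧸ sqSub),
      ∀ k : {k : ℕ // Odd k},
        b k = Submodule.Quotient.mk (xel k.1 k.2.pos.ne') := by
  refine ⟨.ofRepr (.ofLinearMap toOddCoeffs ofOddCoeffs toOddCoeffs_comp_ofOddCoeffs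
    ofOddCoeffs_comp_toOddCoeffs), fun k => ?_⟩
  rw [Module.Basis.coe_ofRepr]
  exact ofOddCoeffs_single k
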